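/- For the Moran process with three strategies A, B, C of frequency-independent fitnesses f > g > h > 0, the fixation probability α_{ij} of strategy A starting from state (i,j) satisfies (1 - (f/g)^{-i})/(1 - (f/g)^{-N}) ≤ α_{ij} ≤ (1 - (f/h)^{-i})/(1 - (f/h)^{-N}) for all (i,j) ∈ Λ_N. -/
import Mathlib


noncomputable section

/-- Total fitness `S_{ij} = i f_{ij} + j g_{ij} + (N-i-j) h_{ij}`. -/
def Sfit (N : ℕ) (f g h : ℕ → ℕ → ℝ) (i j : ℕ) : ℝ :=
  (i : ℝ) * f i j + (j : ℝ) * g i j + ((N - i - j : ℕ) : ℝ) * h i j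

/-- Probability of drawing an A for reproduction and a B for death. -/
def pAB (N : ℕ) (f g h : ℕ → ℕ → ℝ) (i j : ℕ) : ℝ :=
  ((i : ℝ) * f i j / Sfit N f g h i j) * ((j : ℝ) / (N : ℝ))

def pBA (N : ℕ) (f g h : ℕ → ℕ → ℝ) (i j : ℕ) : ℝ :=
  ((j : ℝ) * g i j / Sfit N f g h i j) * ((i : ℝ) / (N : ℝ))

def pAC (N : ℕ) (f g h : ℕ → ℕ → ℝ) (i j : ℕ) : ℝ :=
  ((i : ℝ) * f i j / Sfit N f g h i j) * (((N - i - j : ℕ) : ℝ) / (N : ℝ))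

def pCA (N : ℕ) (f g h : ℕ → ℕ → ℝ) (i j : ℕ) : ℝ :=
  (((N - i - j : ℕ) : ℝ) * h i j / Sfit N f g h i j) * ((i : ℝ) / (N : ℝ))

def pBC (N : ℕ) (f g h : ℕ → ℕ → ℝ) (i j : ℕ) : ℝ :=
  ((j : ℝ) * g i j / Sfit N f g h i j) * (((N - i - j : ℕ) : ℝ) / (N : ℝ))

def pCB (N : ℕ) (f g h : ℕ → ℕ → ℝ) (i j : ℕ) : ℝ :=
  (((N - i - j : ℕ) : ℝ) * h i j / Sfit N f g h i j) * ((j : ℝ) / (N : ℝ))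

/-- `Z⁺_{ij}`: probability that the number of A individuals increases. -/
def Zp (N : ℕ) (f g h : ℕ → ℕ → ℝ) (i j : ℕ) : ℝ :=
  pAB N f g h i j + pAC N f g h i j

/-- `Z⁻_{ij}`: probability that the number of A individuals decreases. -/
def Zm (N : ℕ) (f g h : ℕ → ℕ → ℝ) (i j : ℕ) : ℝ :=
  pBA N f g h i j + pCA N f g h i j

/-- `α` is the fixation-probability function of the Moran process with three
strategies, with boundary values `vA, vB, vC` at the absorbing states
`(N,0)`, `(0,N)`, `(0,0)` and harmonic at all non-absorbing states. -/
def IsMoranFix (N : ℕ) (f g h : ℕ → ℕ → ℝ) (vA vB vC : ℝ) (α : ℕ × ℕ → ℝ) : Prop :=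
  α (N, 0) = vA ∧ α (0, N) = vB ∧ α (0, 0) = vC ∧
  ∀ i j : ℕ, i + j ≤ N → ¬(i = N ∨ j = N ∨ (i = 0 ∧ j = 0)) →
    α (i, j) =
      pAB N f g h i j * α (i + 1, j - 1) + pBA N f g h i j * α (i - 1, j + 1) +
      pAC N f g h i j * α (i + 1, j) + pCA N f g h i j * α (i - 1, j) +
      pBC N f g h i j * α (i, j + 1) + pCB N f g h i j * α (i, j - 1) +
      (1 - (pAB N f g h i j + pBA N f g h i j + pAC N f g h i j +
            pCA N f g h i j + pBC N f g h i j + pCB N f g h i j)) * α (i, j)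

/-- `π` is the fixation-probability function at state `N` of a birth-death
process with birth probabilities `a` and death probabilities `b`. -/
def IsBDFix (N : ℕ) (a b : ℕ → ℝ) (π : ℕ → ℝ) : Prop :=
  π 0 = 0 ∧ π N = 1 ∧ ∀ i, 0 < i → i < N →
    π i = a i * π (i + 1) + b i * π (i - 1) + (1 - a i - b i) * π i

end

noncomputable section AuxiliaryForProof

/-- The two-type Moran comparison function `(1 - r^n)/D`. -/
def Vfun (r D : ℝ) (n : ℕ) : ℝ := (1 - r ^ n) / D

lemma Sfit_pos (N : ℕ) (hN : 1 ≤ N) (f g h : ℝ)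
    (hf : 0 < f) (hg : 0 < g) (hh : 0 < h) (hhg : h ≤ g) (hgf : g ≤ f)
    (i j : ℕ) (hij : i + j ≤ N) :
    0 < Sfit N (fun _ _ => f) (fun _ _ => g) (fun _ _ => h) i j := by
  have e : (i : ℝ) + j + ((N - i - j : ℕ) : ℝ) = N := by
    have e0 : i + j + (N - i - j) = N := by omega
    calc (i : ℝ) + j + ((N - i - j : ℕ) : ℝ) = ((i + j + (N - i - j) : ℕ) : ℝ) := by
          push_cast; ring
      _ = N := by rw [e0]
  have hN' : (1 : ℝ) ≤ N := by exact_mod_cast hN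
  have h1 : (i : ℝ) * h ≤ (i : ℝ) * f := by
    apply mul_le_mul_of_nonneg_left (by linarith) (Nat.cast_nonneg i)
  have h2 : (j : ℝ) * h ≤ (j : ℝ) * g := by
    apply mul_le_mul_of_nonneg_left (by linarith) (Nat.cast_nonneg j)
  have h3 : (1 : ℝ) * h ≤ (N : ℝ) * h := mul_le_mul_of_nonneg_right hN' hh.le
  have e2 : (i : ℝ) * h + (j : ℝ) * h + ((N - i - j : ℕ) : ℝ) * h = (N : ℝ) * h := by
    rw [← e]; ring
  simp only [Sfit]
  linarith

lemma diff_formula (N k j : ℕ) (f g h r D : ℝ)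
    (hS : Sfit N (fun _ _ => f) (fun _ _ => g) (fun _ _ => h) (k + 1) j ≠ 0)
    (hNne : (N : ℝ) ≠ 0) (hD : D ≠ 0) :
    pAB N (fun _ _ => f) (fun _ _ => g) (fun _ _ => h) (k + 1) j * Vfun r D (k + 1 + 1) +
    pBA N (fun _ _ => f) (fun _ _ => g) (fun _ _ => h) (k + 1) j * Vfun r D k +
    pAC N (fun _ _ => f) (fun _ _ => g) (fun _ _ => h) (k + 1) j * Vfun r D (k + 1 + 1) +
    pCA N (fun _ _ => f) (fun _ _ => g) (fun _ _ => h) (k + 1) j * Vfun r D k +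
    pBC N (fun _ _ => f) (fun _ _ => g) (fun _ _ => h) (k + 1) j * Vfun r D (k + 1) +
    pCB N (fun _ _ => f) (fun _ _ => g) (fun _ _ => h) (k + 1) j * Vfun r D (k + 1) +
    (1 - (pAB N (fun _ _ => f) (fun _ _ => g) (fun _ _ => h) (k + 1) j +
          pBA N (fun _ _ => f) (fun _ _ => g) (fun _ _ => h) (k + 1) j +
          pAC N (fun _ _ => f) (fun _ _ => g) (fun _ _ => h) (k + 1) j +
          pCA N (fun _ _ => f) (fun _ _ => g) (fun _ _ => h) (k + 1) j +
          pBC N (fun _ _ => f) (fun _ _ => g) (fun _ _ => h) (k + 1) j +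
          pCB N (fun _ _ => f) (fun _ _ => g) (fun _ _ => h) (k + 1) j)) * Vfun r D (k + 1) -
    Vfun r D (k + 1)
    = ((k : ℝ) + 1) * r ^ k *
        ((((j : ℝ) + ((N - (k + 1) - j : ℕ) : ℝ)) * (f * r) -
          ((j : ℝ) * g + ((N - (k + 1) - j : ℕ) : ℝ) * h)) * (1 - r)) /
      (Sfit N (fun _ _ => f) (fun _ _ => g) (fun _ _ => h) (k + 1) j * (N : ℝ) * D) := by
  have hS' : ((k + 1 : ℕ) : ℝ) * f + (j : ℝ) * g + ((N - (k + 1) - j : ℕ) : ℝ) * h ≠ 0 := by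
    simpa [Sfit] using hS
  simp only [pAB, pBA, pAC, pCA, pBC, pCB, Vfun, Sfit]
  push_cast at hS' ⊢
  field_simp
  ring

/-- Discrete minimum principle for superharmonic functions of the
three-strategy Moran chain. -/
lemma minPrinciple (N : ℕ) (hN : 1 ≤ N) (f g h : ℝ)
    (hf : 0 < f) (hg : 0 < g) (hh : 0 < h) (hhg : h ≤ g) (hgf : g ≤ f)
    (u : ℕ × ℕ → ℝ)
    (huA : 0 ≤ u (N, 0)) (huB : 0 ≤ u (0, N)) (huC : 0 ≤ u (0, 0))
    (hsup : ∀ i j : ℕ, i + j ≤ N → ¬(i = N ∨ j = N ∨ (i = 0 ∧ j = 0)) →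
      pAB N (fun _ _ => f) (fun _ _ => g) (fun _ _ => h) i j * u (i + 1, j - 1) +
      pBA N (fun _ _ => f) (fun _ _ => g) (fun _ _ => h) i j * u (i - 1, j + 1) +
      pAC N (fun _ _ => f) (fun _ _ => g) (fun _ _ => h) i j * u (i + 1, j) +
      pCA N (fun _ _ => f) (fun _ _ => g) (fun _ _ => h) i j * u (i - 1, j) +
      pBC N (fun _ _ => f) (fun _ _ => g) (fun _ _ => h) i j * u (i, j + 1) +
      pCB N (fun _ _ => f) (fun _ _ => g) (fun _ _ => h) i j * u (i, j - 1) +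
      (1 - (pAB N (fun _ _ => f) (fun _ _ => g) (fun _ _ => h) i j +
            pBA N (fun _ _ => f) (fun _ _ => g) (fun _ _ => h) i j +
            pAC N (fun _ _ => f) (fun _ _ => g) (fun _ _ => h) i j +
            pCA N (fun _ _ => f) (fun _ _ => g) (fun _ _ => h) i j +
            pBC N (fun _ _ => f) (fun _ _ => g) (fun _ _ => h) i j +
            pCB N (fun _ _ => f) (fun _ _ => g) (fun _ _ => h) i j)) * u (i, j) ≤ u (i, j)) :
    ∀ i j : ℕ, i + j ≤ N → 0 ≤ u (i, j) := by
  classical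
  set Λ : Finset (ℕ × ℕ) :=
    (Finset.range (N + 1) ×ˢ Finset.range (N + 1)).filter (fun p => p.1 + p.2 ≤ N) with hΛdef
  have hΛ : ∀ a b : ℕ, (a, b) ∈ Λ ↔ a + b ≤ N := by
    intro a b
    simp only [hΛdef, Finset.mem_filter, Finset.mem_product, Finset.mem_range]
    omega
  obtain ⟨p0, hp0, hmin⟩ := Λ.exists_min_image u ⟨(0, 0), (hΛ 0 0).2 (by omega)⟩
  set m := u p0 with hmdef
  have hub : ∀ a b : ℕ, a + b ≤ N → m ≤ u (a, b) := fun a b hab =>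
    hmin (a, b) ((hΛ a b).2 hab)
  suffices hm0 : 0 ≤ m by
    intro i j hij
    exact hm0.trans (hub i j hij)
  set T : Finset (ℕ × ℕ) := Λ.filter (fun p => u p = m) with hTdef
  have hp0T : p0 ∈ T := Finset.mem_filter.2 ⟨hp0, rfl⟩
  obtain ⟨p1, hp1T, hmaxi⟩ := T.exists_max_image (fun p => p.1) ⟨p0, hp0T⟩
  obtain ⟨⟨i, j⟩, hp2, hmaxj⟩ := (T.filter (fun p => p.1 = p1.1)).exists_max_image
    (fun p => p.2) ⟨p1, Finset.mem_filter.2 ⟨hp1T, rfl⟩⟩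
  obtain ⟨hp2T, hp2i⟩ := Finset.mem_filter.1 hp2
  simp only at hp2i
  have hmaxi' : ∀ q ∈ T, q.1 ≤ i := by
    intro q hq; rw [hp2i]; exact hmaxi q hq
  have hmaxj' : ∀ b : ℕ, (i, b) ∈ T → b ≤ j := by
    intro b hb
    exact hmaxj (i, b) (Finset.mem_filter.2 ⟨hb, by simp [hp2i]⟩)
  have hijN : i + j ≤ N := (hΛ i j).1 (Finset.mem_filter.1 hp2T).1
  have huij : u (i, j) = m := (Finset.mem_filter.1 hp2T).2
  by_cases habs : i = N ∨ j = N ∨ (i = 0 ∧ j = 0)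
  · rcases habs with h1 | h1 | ⟨h1, h2⟩
    · have h2 : j = 0 := by omega
      have : m = u (N, 0) := by rw [← huij, h1, h2]
      linarith
    · have h2 : i = 0 := by omega
      have : m = u (0, N) := by rw [← huij, h1, h2]
      linarith
    · have : m = u (0, 0) := by rw [← huij, h1, h2]
      linarith
  · exfalso
    have hsup' := hsup i j hijN habs
    rw [huij] at hsup'
    have hS := Sfit_pos N hN f g h hf hg hh hhg hgf i j hijN
    have hNpos : (0 : ℝ) < N := by exact_mod_cast hN
    have hnn : ∀ a b : ℝ, 0 ≤ a → 0 ≤ b →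
        0 ≤ a / Sfit N (fun _ _ => f) (fun _ _ => g) (fun _ _ => h) i j * (b / (N : ℝ)) :=
      fun a b ha hb => mul_nonneg (div_nonneg ha hS.le) (div_nonneg hb hNpos.le)
    have nn1 : 0 ≤ pAB N (fun _ _ => f) (fun _ _ => g) (fun _ _ => h) i j := by
      simp only [pAB]
      exact hnn _ _ (mul_nonneg (Nat.cast_nonneg _) hf.le) (Nat.cast_nonneg _)
    have nn2 : 0 ≤ pBA N (fun _ _ => f) (fun _ _ => g) (fun _ _ => h) i j := by
      simp only [pBA]
      exact hnn _ _ (mul_nonneg (Nat.cast_nonneg _) hg.le) (Nat.cast_nonneg _)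
    have nn3 : 0 ≤ pAC N (fun _ _ => f) (fun _ _ => g) (fun _ _ => h) i j := by
      simp only [pAC]
      exact hnn _ _ (mul_nonneg (Nat.cast_nonneg _) hf.le) (Nat.cast_nonneg _)
    have nn4 : 0 ≤ pCA N (fun _ _ => f) (fun _ _ => g) (fun _ _ => h) i j := by
      simp only [pCA]
      exact hnn _ _ (mul_nonneg (Nat.cast_nonneg _) hh.le) (Nat.cast_nonneg _)
    have nn5 : 0 ≤ pBC N (fun _ _ => f) (fun _ _ => g) (fun _ _ => h) i j := by
      simp only [pBC]
      exact hnn _ _ (mul_nonneg (Nat.cast_nonneg _) hg.le) (Nat.cast_nonneg _)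
    have nn6 : 0 ≤ pCB N (fun _ _ => f) (fun _ _ => g) (fun _ _ => h) i j := by
      simp only [pCB]
      exact hnn _ _ (mul_nonneg (Nat.cast_nonneg _) hh.le) (Nat.cast_nonneg _)
    have k1 : pAB N (fun _ _ => f) (fun _ _ => g) (fun _ _ => h) i j * m ≤
        pAB N (fun _ _ => f) (fun _ _ => g) (fun _ _ => h) i j * u (i + 1, j - 1) :=
      mul_le_mul_of_nonneg_left (hub _ _ (by omega)) nn1
    have k2 : pBA N (fun _ _ => f) (fun _ _ => g) (fun _ _ => h) i j * m ≤
        pBA N (fun _ _ => f) (fun _ _ => g) (fun _ _ => h) i j * u (i - 1, j + 1) :=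
      mul_le_mul_of_nonneg_left (hub _ _ (by omega)) nn2
    have k3 : pAC N (fun _ _ => f) (fun _ _ => g) (fun _ _ => h) i j * m ≤
        pAC N (fun _ _ => f) (fun _ _ => g) (fun _ _ => h) i j * u (i + 1, j) := by
      by_cases hc : N - i - j = 0
      · have hz : pAC N (fun _ _ => f) (fun _ _ => g) (fun _ _ => h) i j = 0 := by
          simp [pAC, hc]
        rw [hz]; simp
      · exact mul_le_mul_of_nonneg_left (hub _ _ (by omega)) nn3
    have k4 : pCA N (fun _ _ => f) (fun _ _ => g) (fun _ _ => h) i j * m ≤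
        pCA N (fun _ _ => f) (fun _ _ => g) (fun _ _ => h) i j * u (i - 1, j) :=
      mul_le_mul_of_nonneg_left (hub _ _ (by omega)) nn4
    have k5 : pBC N (fun _ _ => f) (fun _ _ => g) (fun _ _ => h) i j * m ≤
        pBC N (fun _ _ => f) (fun _ _ => g) (fun _ _ => h) i j * u (i, j + 1) := by
      by_cases hc : N - i - j = 0
      · have hz : pBC N (fun _ _ => f) (fun _ _ => g) (fun _ _ => h) i j = 0 := by
          simp [pBC, hc]
        rw [hz]; simp
      · exact mul_le_mul_of_nonneg_left (hub _ _ (by omega)) nn5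
    have k6 : pCB N (fun _ _ => f) (fun _ _ => g) (fun _ _ => h) i j * m ≤
        pCB N (fun _ _ => f) (fun _ _ => g) (fun _ _ => h) i j * u (i, j - 1) :=
      mul_le_mul_of_nonneg_left (hub _ _ (by omega)) nn6
    have expand : (1 - (pAB N (fun _ _ => f) (fun _ _ => g) (fun _ _ => h) i j +
            pBA N (fun _ _ => f) (fun _ _ => g) (fun _ _ => h) i j +
            pAC N (fun _ _ => f) (fun _ _ => g) (fun _ _ => h) i j +
            pCA N (fun _ _ => f) (fun _ _ => g) (fun _ _ => h) i j +
            pBC N (fun _ _ => f) (fun _ _ => g) (fun _ _ => h) i j +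
            pCB N (fun _ _ => f) (fun _ _ => g) (fun _ _ => h) i j)) * m
        = m - pAB N (fun _ _ => f) (fun _ _ => g) (fun _ _ => h) i j * m
            - pBA N (fun _ _ => f) (fun _ _ => g) (fun _ _ => h) i j * m
            - pAC N (fun _ _ => f) (fun _ _ => g) (fun _ _ => h) i j * m
            - pCA N (fun _ _ => f) (fun _ _ => g) (fun _ _ => h) i j * m
            - pBC N (fun _ _ => f) (fun _ _ => g) (fun _ _ => h) i j * m
            - pCB N (fun _ _ => f) (fun _ _ => g) (fun _ _ => h) i j * m := by ring
    rcases Nat.eq_zero_or_pos i with hi0 | hi1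
    · -- i = 0 : use pBC, neighbor (i, j+1)
      have hj1 : 1 ≤ j := by omega
      have hjN : j < N := by omega
      have hCpos : (0 : ℝ) < ((N - i - j : ℕ) : ℝ) := by
        have h1 : 0 < N - i - j := by omega
        exact_mod_cast h1
      have hjpos : (0 : ℝ) < (j : ℝ) := by exact_mod_cast hj1
      have hppos : 0 < pBC N (fun _ _ => f) (fun _ _ => g) (fun _ _ => h) i j := by
        simp only [pBC]
        exact mul_pos (div_pos (mul_pos hjpos hg) hS) (div_pos hCpos hNpos)
      have hle : pBC N (fun _ _ => f) (fun _ _ => g) (fun _ _ => h) i j * u (i, j + 1) ≤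
          pBC N (fun _ _ => f) (fun _ _ => g) (fun _ _ => h) i j * m := by
        linarith [k1, k2, k3, k4, k6, hsup', expand]
      have hle2 : u (i, j + 1) ≤ m := le_of_mul_le_mul_left (by linarith) hppos
      have heq : u (i, j + 1) = m := le_antisymm hle2 (hub _ _ (by omega))
      have hmem : (i, j + 1) ∈ T := Finset.mem_filter.2 ⟨(hΛ _ _).2 (by omega), heq⟩
      have := hmaxj' (j + 1) hmem
      omega
    · by_cases hin : i + j < N
      · -- use pAC, neighbor (i+1, j)
        have hCpos : (0 : ℝ) < ((N - i - j : ℕ) : ℝ) := by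
          have h1 : 0 < N - i - j := by omega
          exact_mod_cast h1
        have hipos : (0 : ℝ) < (i : ℝ) := by exact_mod_cast hi1
        have hppos : 0 < pAC N (fun _ _ => f) (fun _ _ => g) (fun _ _ => h) i j := by
          simp only [pAC]
          exact mul_pos (div_pos (mul_pos hipos hf) hS) (div_pos hCpos hNpos)
        have hle : pAC N (fun _ _ => f) (fun _ _ => g) (fun _ _ => h) i j * u (i + 1, j) ≤
            pAC N (fun _ _ => f) (fun _ _ => g) (fun _ _ => h) i j * m := by
          linarith [k1, k2, k4, k5, k6, hsup', expand]
        have hle2 : u (i + 1, j) ≤ m := le_of_mul_le_mul_left (by linarith) hppos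
        have heq : u (i + 1, j) = m := le_antisymm hle2 (hub _ _ (by omega))
        have hmem : (i + 1, j) ∈ T := Finset.mem_filter.2 ⟨(hΛ _ _).2 (by omega), heq⟩
        have := hmaxi' (i + 1, j) hmem
        omega
      · -- i + j = N, j ≥ 1 : use pAB, neighbor (i+1, j-1)
        have hj1 : 1 ≤ j := by omega
        have hipos : (0 : ℝ) < (i : ℝ) := by exact_mod_cast hi1
        have hjpos : (0 : ℝ) < (j : ℝ) := by exact_mod_cast hj1
        have hppos : 0 < pAB N (fun _ _ => f) (fun _ _ => g) (fun _ _ => h) i j := by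
          simp only [pAB]
          exact mul_pos (div_pos (mul_pos hipos hf) hS) (div_pos hjpos hNpos)
        have hle : pAB N (fun _ _ => f) (fun _ _ => g) (fun _ _ => h) i j * u (i + 1, j - 1) ≤
            pAB N (fun _ _ => f) (fun _ _ => g) (fun _ _ => h) i j * m := by
          linarith [k2, k3, k4, k5, k6, hsup', expand]
        have hle2 : u (i + 1, j - 1) ≤ m := le_of_mul_le_mul_left (by linarith) hppos
        have heq : u (i + 1, j - 1) = m := le_antisymm hle2 (hub _ _ (by omega))
        have hmem : (i + 1, j - 1) ∈ T := Finset.mem_filter.2 ⟨(hΛ _ _).2 (by omega), heq⟩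
        have := hmaxi' (i + 1, j - 1) hmem
        omega

/-- The lower comparison function is a subsolution. -/
lemma vsub_lower (N : ℕ) (hN : 1 ≤ N) (f g h : ℝ)
    (hfg : g < f) (hgh : h < g) (hh : 0 < h)
    (i j : ℕ) (hij : i + j ≤ N) :
    Vfun (g / f) (1 - (g / f) ^ N) i ≤
      pAB N (fun _ _ => f) (fun _ _ => g) (fun _ _ => h) i j * Vfun (g / f) (1 - (g / f) ^ N) (i + 1) +
      pBA N (fun _ _ => f) (fun _ _ => g) (fun _ _ => h) i j * Vfun (g / f) (1 - (g / f) ^ N) (i - 1) +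
      pAC N (fun _ _ => f) (fun _ _ => g) (fun _ _ => h) i j * Vfun (g / f) (1 - (g / f) ^ N) (i + 1) +
      pCA N (fun _ _ => f) (fun _ _ => g) (fun _ _ => h) i j * Vfun (g / f) (1 - (g / f) ^ N) (i - 1) +
      pBC N (fun _ _ => f) (fun _ _ => g) (fun _ _ => h) i j * Vfun (g / f) (1 - (g / f) ^ N) i +
      pCB N (fun _ _ => f) (fun _ _ => g) (fun _ _ => h) i j * Vfun (g / f) (1 - (g / f) ^ N) i +
      (1 - (pAB N (fun _ _ => f) (fun _ _ => g) (fun _ _ => h) i j +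
            pBA N (fun _ _ => f) (fun _ _ => g) (fun _ _ => h) i j +
            pAC N (fun _ _ => f) (fun _ _ => g) (fun _ _ => h) i j +
            pCA N (fun _ _ => f) (fun _ _ => g) (fun _ _ => h) i j +
            pBC N (fun _ _ => f) (fun _ _ => g) (fun _ _ => h) i j +
            pCB N (fun _ _ => f) (fun _ _ => g) (fun _ _ => h) i j)) *
        Vfun (g / f) (1 - (g / f) ^ N) i := by
  have hg : 0 < g := hh.trans hgh
  have hf : 0 < f := hg.trans hfg
  have hr0 : 0 < g / f := div_pos hg hf
  have hr1 : g / f < 1 := (div_lt_one hf).2 hfg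
  have hD : 0 < 1 - (g / f) ^ N := by
    have := pow_lt_one₀ hr0.le hr1 (by omega : N ≠ 0)
    linarith
  rcases Nat.eq_zero_or_pos i with rfl | hpos
  · have z1 : pAB N (fun _ _ => f) (fun _ _ => g) (fun _ _ => h) 0 j = 0 := by simp [pAB]
    have z2 : pBA N (fun _ _ => f) (fun _ _ => g) (fun _ _ => h) 0 j = 0 := by simp [pBA]
    have z3 : pAC N (fun _ _ => f) (fun _ _ => g) (fun _ _ => h) 0 j = 0 := by simp [pAC]
    have z4 : pCA N (fun _ _ => f) (fun _ _ => g) (fun _ _ => h) 0 j = 0 := by simp [pCA]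
    rw [z1, z2, z3, z4]
    exact le_of_eq (by ring)
  · obtain ⟨k, rfl⟩ : ∃ k, i = k + 1 := ⟨i - 1, by omega⟩
    have hS := Sfit_pos N hN f g h hf hg hh hgh.le hfg.le (k + 1) j hij
    have hNne : (N : ℝ) ≠ 0 := Nat.cast_ne_zero.2 (by omega)
    have eq := diff_formula N k j f g h (g / f) (1 - (g / f) ^ N) hS.ne' hNne hD.ne'
    have hfr : f * (g / f) = g := by field_simp
    have hCnn : (0 : ℝ) ≤ ((N - (k + 1) - j : ℕ) : ℝ) := Nat.cast_nonneg _
    have hQ : 0 ≤ (((j : ℝ) + ((N - (k + 1) - j : ℕ) : ℝ)) * (f * (g / f)) -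
        ((j : ℝ) * g + ((N - (k + 1) - j : ℕ) : ℝ) * h)) * (1 - g / f) := by
      apply mul_nonneg _ (by linarith)
      rw [hfr]
      nlinarith [mul_nonneg hCnn (by linarith : (0 : ℝ) ≤ g - h)]
    have hden : 0 < Sfit N (fun _ _ => f) (fun _ _ => g) (fun _ _ => h) (k + 1) j * (N : ℝ) *
        (1 - (g / f) ^ N) := by
      apply mul_pos (mul_pos hS _) hD
      exact_mod_cast Nat.pos_of_ne_zero (by omega)
    have hrhs : 0 ≤ ((k : ℝ) + 1) * (g / f) ^ k *
        ((((j : ℝ) + ((N - (k + 1) - j : ℕ) : ℝ)) * (f * (g / f)) -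
          ((j : ℝ) * g + ((N - (k + 1) - j : ℕ) : ℝ) * h)) * (1 - g / f)) /
        (Sfit N (fun _ _ => f) (fun _ _ => g) (fun _ _ => h) (k + 1) j * (N : ℝ) *
          (1 - (g / f) ^ N)) := by
      apply div_nonneg _ hden.le
      apply mul_nonneg (mul_nonneg (by positivity) (by positivity)) hQ
    simp only [Nat.add_sub_cancel]
    linarith [eq, hrhs]

/-- The upper comparison function is a supersolution. -/
lemma vsub_upper (N : ℕ) (hN : 1 ≤ N) (f g h : ℝ)
    (hfg : g < f) (hgh : h < g) (hh : 0 < h)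
    (i j : ℕ) (hij : i + j ≤ N) :
      pAB N (fun _ _ => f) (fun _ _ => g) (fun _ _ => h) i j * Vfun (h / f) (1 - (h / f) ^ N) (i + 1) +
      pBA N (fun _ _ => f) (fun _ _ => g) (fun _ _ => h) i j * Vfun (h / f) (1 - (h / f) ^ N) (i - 1) +
      pAC N (fun _ _ => f) (fun _ _ => g) (fun _ _ => h) i j * Vfun (h / f) (1 - (h / f) ^ N) (i + 1) +
      pCA N (fun _ _ => f) (fun _ _ => g) (fun _ _ => h) i j * Vfun (h / f) (1 - (h / f) ^ N) (i - 1) +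
      pBC N (fun _ _ => f) (fun _ _ => g) (fun _ _ => h) i j * Vfun (h / f) (1 - (h / f) ^ N) i +
      pCB N (fun _ _ => f) (fun _ _ => g) (fun _ _ => h) i j * Vfun (h / f) (1 - (h / f) ^ N) i +
      (1 - (pAB N (fun _ _ => f) (fun _ _ => g) (fun _ _ => h) i j +
            pBA N (fun _ _ => f) (fun _ _ => g) (fun _ _ => h) i j +
            pAC N (fun _ _ => f) (fun _ _ => g) (fun _ _ => h) i j +
            pCA N (fun _ _ => f) (fun _ _ => g) (fun _ _ => h) i j +
            pBC N (fun _ _ => f) (fun _ _ => g) (fun _ _ => h) i j +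
            pCB N (fun _ _ => f) (fun _ _ => g) (fun _ _ => h) i j)) *
        Vfun (h / f) (1 - (h / f) ^ N) i ≤ Vfun (h / f) (1 - (h / f) ^ N) i := by
  have hg : 0 < g := hh.trans hgh
  have hf : 0 < f := hg.trans hfg
  have hr0 : 0 < h / f := div_pos hh hf
  have hr1 : h / f < 1 := (div_lt_one hf).2 (hgh.trans hfg)
  have hD : 0 < 1 - (h / f) ^ N := by
    have := pow_lt_one₀ hr0.le hr1 (by omega : N ≠ 0)
    linarith
  rcases Nat.eq_zero_or_pos i with rfl | hpos
  · have z1 : pAB N (fun _ _ => f) (fun _ _ => g) (fun _ _ => h) 0 j = 0 := by simp [pAB]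
    have z2 : pBA N (fun _ _ => f) (fun _ _ => g) (fun _ _ => h) 0 j = 0 := by simp [pBA]
    have z3 : pAC N (fun _ _ => f) (fun _ _ => g) (fun _ _ => h) 0 j = 0 := by simp [pAC]
    have z4 : pCA N (fun _ _ => f) (fun _ _ => g) (fun _ _ => h) 0 j = 0 := by simp [pCA]
    rw [z1, z2, z3, z4]
    exact le_of_eq (by ring)
  · obtain ⟨k, rfl⟩ : ∃ k, i = k + 1 := ⟨i - 1, by omega⟩
    have hS := Sfit_pos N hN f g h hf hg hh hgh.le hfg.le (k + 1) j hij
    have hNne : (N : ℝ) ≠ 0 := Nat.cast_ne_zero.2 (by omega)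
    have eq := diff_formula N k j f g h (h / f) (1 - (h / f) ^ N) hS.ne' hNne hD.ne'
    have hfr : f * (h / f) = h := by field_simp
    have hCnn : (0 : ℝ) ≤ ((N - (k + 1) - j : ℕ) : ℝ) := Nat.cast_nonneg _
    have hQ : (((j : ℝ) + ((N - (k + 1) - j : ℕ) : ℝ)) * (f * (h / f)) -
        ((j : ℝ) * g + ((N - (k + 1) - j : ℕ) : ℝ) * h)) * (1 - h / f) ≤ 0 := by
      have h1 : ((j : ℝ) + ((N - (k + 1) - j : ℕ) : ℝ)) * (f * (h / f)) -
          ((j : ℝ) * g + ((N - (k + 1) - j : ℕ) : ℝ) * h) ≤ 0 := by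
        rw [hfr]
        nlinarith [mul_nonneg (Nat.cast_nonneg (α := ℝ) j) (by linarith : (0 : ℝ) ≤ g - h)]
      nlinarith [mul_nonneg (neg_nonneg.2 h1) (by linarith : (0 : ℝ) ≤ 1 - h / f)]
    have hden : 0 < Sfit N (fun _ _ => f) (fun _ _ => g) (fun _ _ => h) (k + 1) j * (N : ℝ) *
        (1 - (h / f) ^ N) := by
      apply mul_pos (mul_pos hS _) hD
      exact_mod_cast Nat.pos_of_ne_zero (by omega)
    have hnum : ((k : ℝ) + 1) * (h / f) ^ k *
        ((((j : ℝ) + ((N - (k + 1) - j : ℕ) : ℝ)) * (f * (h / f)) -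
          ((j : ℝ) * g + ((N - (k + 1) - j : ℕ) : ℝ) * h)) * (1 - h / f)) ≤ 0 := by
      nlinarith [mul_nonneg (mul_nonneg (by positivity : (0:ℝ) ≤ (k : ℝ) + 1)
        (by positivity : (0:ℝ) ≤ (h / f) ^ k)) (neg_nonneg.2 hQ)]
    have hrhs : ((k : ℝ) + 1) * (h / f) ^ k *
        ((((j : ℝ) + ((N - (k + 1) - j : ℕ) : ℝ)) * (f * (h / f)) -
          ((j : ℝ) * g + ((N - (k + 1) - j : ℕ) : ℝ) * h)) * (1 - h / f)) /
        (Sfit N (fun _ _ => f) (fun _ _ => g) (fun _ _ => h) (k + 1) j * (N : ℝ) *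
          (1 - (h / f) ^ N)) ≤ 0 :=
      div_nonpos_of_nonpos_of_nonneg hnum hden.le
    simp only [Nat.add_sub_cancel]
    linarith [eq, hrhs]

/-- Abstract combination step for the lower bound. -/
lemma combine_lower (P1 P2 P3 P4 P5 P6 a1 a2 a3 a4 a5 a6 a0 v1 v2 v3 v4 v5 v6 v0 : ℝ)
    (ha : a0 = P1 * a1 + P2 * a2 + P3 * a3 + P4 * a4 + P5 * a5 + P6 * a6 +
      (1 - (P1 + P2 + P3 + P4 + P5 + P6)) * a0)
    (hv : v0 ≤ P1 * v1 + P2 * v2 + P3 * v3 + P4 * v4 + P5 * v5 + P6 * v6 +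
      (1 - (P1 + P2 + P3 + P4 + P5 + P6)) * v0) :
    P1 * (a1 - v1) + P2 * (a2 - v2) + P3 * (a3 - v3) + P4 * (a4 - v4) +
    P5 * (a5 - v5) + P6 * (a6 - v6) +
    (1 - (P1 + P2 + P3 + P4 + P5 + P6)) * (a0 - v0) ≤ a0 - v0 := by
  have e : P1 * (a1 - v1) + P2 * (a2 - v2) + P3 * (a3 - v3) + P4 * (a4 - v4) +
      P5 * (a5 - v5) + P6 * (a6 - v6) +
      (1 - (P1 + P2 + P3 + P4 + P5 + P6)) * (a0 - v0)
      = (P1 * a1 + P2 * a2 + P3 * a3 + P4 * a4 + P5 * a5 + P6 * a6 +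
          (1 - (P1 + P2 + P3 + P4 + P5 + P6)) * a0) -
        (P1 * v1 + P2 * v2 + P3 * v3 + P4 * v4 + P5 * v5 + P6 * v6 +
          (1 - (P1 + P2 + P3 + P4 + P5 + P6)) * v0) := by ring
  rw [e, ← ha]
  linarith

/-- Abstract combination step for the upper bound. -/
lemma combine_upper (P1 P2 P3 P4 P5 P6 a1 a2 a3 a4 a5 a6 a0 v1 v2 v3 v4 v5 v6 v0 : ℝ)
    (ha : a0 = P1 * a1 + P2 * a2 + P3 * a3 + P4 * a4 + P5 * a5 + P6 * a6 +
      (1 - (P1 + P2 + P3 + P4 + P5 + P6)) * a0)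
    (hv : P1 * v1 + P2 * v2 + P3 * v3 + P4 * v4 + P5 * v5 + P6 * v6 +
      (1 - (P1 + P2 + P3 + P4 + P5 + P6)) * v0 ≤ v0) :
    P1 * (v1 - a1) + P2 * (v2 - a2) + P3 * (v3 - a3) + P4 * (v4 - a4) +
    P5 * (v5 - a5) + P6 * (v6 - a6) +
    (1 - (P1 + P2 + P3 + P4 + P5 + P6)) * (v0 - a0) ≤ v0 - a0 := by
  have e : P1 * (v1 - a1) + P2 * (v2 - a2) + P3 * (v3 - a3) + P4 * (v4 - a4) +
      P5 * (v5 - a5) + P6 * (v6 - a6) +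
      (1 - (P1 + P2 + P3 + P4 + P5 + P6)) * (v0 - a0)
      = (P1 * v1 + P2 * v2 + P3 * v3 + P4 * v4 + P5 * v5 + P6 * v6 +
          (1 - (P1 + P2 + P3 + P4 + P5 + P6)) * v0) -
        (P1 * a1 + P2 * a2 + P3 * a3 + P4 * a4 + P5 * a5 + P6 * a6 +
          (1 - (P1 + P2 + P3 + P4 + P5 + P6)) * a0) := by ring
  rw [e, ← ha]
  linarith

lemma zpow_neg_div (x y : ℝ) (n : ℕ) : (x / y) ^ (-(n : ℤ)) = (y / x) ^ n := by
  rw [zpow_neg, zpow_natCast, ← inv_pow, inv_div]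

end AuxiliaryForProof

/-- For the Moran process with three strategies of frequency-independent
fitnesses `f > g > h > 0`, the fixation probability `α_{ij}` of strategy A
satisfies
`(1-(f/g)^{-i})/(1-(f/g)^{-N}) ≤ α_{ij} ≤ (1-(f/h)^{-i})/(1-(f/h)^{-N})`
for all `(i,j) ∈ Λ_N`. -/
theorem freq_indep_bounds (N : ℕ) (hN : 1 ≤ N) (f g h : ℝ)
    (hfg : g < f) (hgh : h < g) (hh : 0 < h)
    (α : ℕ × ℕ → ℝ)
    (hα : IsMoranFix N (fun _ _ => f) (fun _ _ => g) (fun _ _ => h) 1 0 0 α) :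
    ∀ i j : ℕ, i + j ≤ N →
      (1 - (f / g) ^ (-(i : ℤ))) / (1 - (f / g) ^ (-(N : ℤ))) ≤ α (i, j) ∧
      α (i, j) ≤ (1 - (f / h) ^ (-(i : ℤ))) / (1 - (f / h) ^ (-(N : ℤ))) := by
  have hg : 0 < g := hh.trans hgh
  have hf : 0 < f := hg.trans hfg
  obtain ⟨hbA, hbB, hbC, hharm⟩ := hα
  intro i j hij
  constructor
  · -- lower bound
    have hr0 : 0 < g / f := div_pos hg hf
    have hr1 : g / f < 1 := (div_lt_one hf).2 hfg
    have hD : 0 < 1 - (g / f) ^ N := by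
      have := pow_lt_one₀ hr0.le hr1 (by omega : N ≠ 0)
      linarith
    have hmain := minPrinciple N hN f g h hf hg hh hgh.le hfg.le
      (fun p => α p - Vfun (g / f) (1 - (g / f) ^ N) p.1)
      (by
        dsimp only
        rw [hbA]
        have e : Vfun (g / f) (1 - (g / f) ^ N) N = 1 := by
          simp only [Vfun]; exact div_self hD.ne'
        rw [e]; norm_num)
      (by
        dsimp only
        rw [hbB]
        have e : Vfun (g / f) (1 - (g / f) ^ N) 0 = 0 := by simp [Vfun]
        rw [e]; norm_num)
      (by
        dsimp only
        rw [hbC]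
        have e : Vfun (g / f) (1 - (g / f) ^ N) 0 = 0 := by simp [Vfun]
        rw [e]; norm_num)
      (by
        intro a b hab hnab
        have hαe := hharm a b hab hnab
        have hv := vsub_lower N hN f g h hfg hgh hh a b hab
        dsimp only
        exact combine_lower _ _ _ _ _ _ _ _ _ _ _ _ _ _ _ _ _ _ _ _ hαe hv)
      i j hij
    dsimp only at hmain
    rw [zpow_neg_div f g i, zpow_neg_div f g N]
    simp only [Vfun] at hmain
    linarith
  · -- upper bound
    have hr0 : 0 < h / f := div_pos hh hf
    have hr1 : h / f < 1 := (div_lt_one hf).2 (hgh.trans hfg)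
    have hD : 0 < 1 - (h / f) ^ N := by
      have := pow_lt_one₀ hr0.le hr1 (by omega : N ≠ 0)
      linarith
    have hmain := minPrinciple N hN f g h hf hg hh hgh.le hfg.le
      (fun p => Vfun (h / f) (1 - (h / f) ^ N) p.1 - α p)
      (by
        dsimp only
        rw [hbA]
        have e : Vfun (h / f) (1 - (h / f) ^ N) N = 1 := by
          simp only [Vfun]; exact div_self hD.ne'
        rw [e]; norm_num)
      (by
        dsimp only
        rw [hbB]
        have e : Vfun (h / f) (1 - (h / f) ^ N) 0 = 0 := by simp [Vfun]
        rw [e]; norm_num)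
      (by
        dsimp only
        rw [hbC]
        have e : Vfun (h / f) (1 - (h / f) ^ N) 0 = 0 := by simp [Vfun]
        rw [e]; norm_num)
      (by
        intro a b hab hnab
        have hαe := hharm a b hab hnab
        have hv := vsub_upper N hN f g h hfg hgh hh a b hab
        dsimp only
        exact combine_upper _ _ _ _ _ _ _ _ _ _ _ _ _ _ _ _ _ _ _ _ hαe hv)
      i j hij
    dsimp only at hmain
    rw [zpow_neg_div f h i, zpow_neg_div f h N]
    simp only [Vfun] at hmain
    linarith
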